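/- arXiv:2402.13987 — 2 statements merged into one kernel-verified Lean document; each statement's English description precedes it below -/
import Mathlib

section
/- Two-layer GIN perturbation bound: With A₁ = A + (1+α)I the GIN operator and A₂ = A' + (1+α)I, suppose ‖A − A'‖ ≤ ε. Let Φ¹(B) = φ¹(B X W¹) and f(B) = φ²(B Φ¹(B-shifted) W²) as in the GIN architecture with φ¹, φ² 1-Lipschitz and φ¹(0)=0. Then ‖f(A) − f(A')‖ ≤ ‖W²‖ ‖W¹‖ ‖X‖ ε (2‖A₁‖ + ε). -/
open scoped Matrix.Norms.L2Operator

/-- Two-layer GIN perturbation bound (key inequality of Theorem 1, GIN case):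
with `A₁ = A + (1+α)I`, `A₂ = A' + (1+α)I` and `‖A - A'‖ ≤ ε`,
`‖f(A) - f(A')‖ ≤ ‖W²‖ ‖W¹‖ ‖X‖ ε (2‖A₁‖ + ε)`. -/
theorem gin_two_layer_perturbation_bound {n K h e : ℕ}
    (A A' : Matrix (Fin n) (Fin n) ℝ) (α : ℝ) (X : Matrix (Fin n) (Fin K) ℝ)
    (W1 : Matrix (Fin K) (Fin h) ℝ) (W2 : Matrix (Fin h) (Fin e) ℝ)
    (φ1 : Matrix (Fin n) (Fin h) ℝ → Matrix (Fin n) (Fin h) ℝ)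
    (φ2 : Matrix (Fin n) (Fin e) ℝ → Matrix (Fin n) (Fin e) ℝ)
    (hφ1 : ∀ M N, ‖φ1 M - φ1 N‖ ≤ ‖M - N‖)
    (hφ2 : ∀ M N, ‖φ2 M - φ2 N‖ ≤ ‖M - N‖)
    (hφ10 : φ1 0 = 0)
    (ε : ℝ) (hdiff : ‖A - A'‖ ≤ ε)
    (A1 A2 : Matrix (Fin n) (Fin n) ℝ)
    (hA1 : A1 = A + (1 + α) • (1 : Matrix (Fin n) (Fin n) ℝ))
    (hA2 : A2 = A' + (1 + α) • (1 : Matrix (Fin n) (Fin n) ℝ)) :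
    ‖φ2 (A1 * φ1 (A1 * X * W1) * W2) - φ2 (A2 * φ1 (A2 * X * W1) * W2)‖
      ≤ ‖W2‖ * ‖W1‖ * ‖X‖ * ε * (2 * ‖A1‖ + ε) := by
  have hεnn : 0 ≤ ε := le_trans (norm_nonneg _) hdiff
  have hAA : A1 - A2 = A - A' := by rw [hA1, hA2]; abel
  have hAAε : ‖A1 - A2‖ ≤ ε := by rw [hAA]; exact hdiff
  set Φ1 := φ1 (A1 * X * W1)
  set Φ2 := φ1 (A2 * X * W1)
  have hΦdiff : ‖Φ1 - Φ2‖ ≤ ε * ‖X‖ * ‖W1‖ := by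
    refine le_trans (hφ1 _ _) ?_
    have : A1 * X * W1 - A2 * X * W1 = (A1 - A2) * X * W1 := by
      simp [Matrix.sub_mul]
    rw [this]
    calc ‖(A1 - A2) * X * W1‖ ≤ ‖(A1 - A2) * X‖ * ‖W1‖ := Matrix.l2_opNorm_mul _ _
      _ ≤ ‖A1 - A2‖ * ‖X‖ * ‖W1‖ := by
          gcongr; exact Matrix.l2_opNorm_mul _ _
      _ ≤ ε * ‖X‖ * ‖W1‖ := by gcongr
  have hΦ2 : ‖Φ2‖ ≤ (‖A1‖ + ε) * ‖X‖ * ‖W1‖ := by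
    have h0 : ‖Φ2‖ = ‖Φ2 - φ1 0‖ := by rw [hφ10, sub_zero]
    rw [h0]
    refine le_trans (hφ1 _ _) ?_
    rw [sub_zero]
    calc ‖A2 * X * W1‖ ≤ ‖A2 * X‖ * ‖W1‖ := Matrix.l2_opNorm_mul _ _
      _ ≤ ‖A2‖ * ‖X‖ * ‖W1‖ := by gcongr; exact Matrix.l2_opNorm_mul _ _
      _ ≤ (‖A1‖ + ε) * ‖X‖ * ‖W1‖ := by
          gcongr
          calc ‖A2‖ = ‖A1 - (A1 - A2)‖ := by rw [sub_sub_cancel]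
            _ ≤ ‖A1‖ + ‖A1 - A2‖ := norm_sub_le _ _
            _ ≤ ‖A1‖ + ε := by gcongr
  have key : ‖A1 * Φ1 - A2 * Φ2‖ ≤ ‖A1‖ * (ε * ‖X‖ * ‖W1‖) + ε * ((‖A1‖ + ε) * ‖X‖ * ‖W1‖) := by
    have hsplit : A1 * Φ1 - A2 * Φ2 = A1 * (Φ1 - Φ2) + (A1 - A2) * Φ2 := by
      simp [Matrix.mul_sub, Matrix.sub_mul]
    rw [hsplit]
    refine le_trans (norm_add_le _ _) ?_
    gcongr
    · calc ‖A1 * (Φ1 - Φ2)‖ ≤ ‖A1‖ * ‖Φ1 - Φ2‖ := Matrix.l2_opNorm_mul _ _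
        _ ≤ ‖A1‖ * (ε * ‖X‖ * ‖W1‖) := by gcongr
    · calc ‖(A1 - A2) * Φ2‖ ≤ ‖A1 - A2‖ * ‖Φ2‖ := Matrix.l2_opNorm_mul _ _
        _ ≤ ε * ((‖A1‖ + ε) * ‖X‖ * ‖W1‖) := by gcongr
  refine le_trans (hφ2 _ _) ?_
  have : A1 * Φ1 * W2 - A2 * Φ2 * W2 = (A1 * Φ1 - A2 * Φ2) * W2 := by
    simp [Matrix.sub_mul]
  rw [this]
  calc ‖(A1 * Φ1 - A2 * Φ2) * W2‖ ≤ ‖A1 * Φ1 - A2 * Φ2‖ * ‖W2‖ := Matrix.l2_opNorm_mul _ _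
    _ ≤ (‖A1‖ * (ε * ‖X‖ * ‖W1‖) + ε * ((‖A1‖ + ε) * ‖X‖ * ‖W1‖)) * ‖W2‖ := by
        gcongr
    _ = ‖W2‖ * ‖W1‖ * ‖X‖ * ε * (2 * ‖A1‖ + ε) := by ring
end

section
/- The robustness bound of Theorem 1 extended to L layers (GCN case): if each layer i has 1-Lipschitz activation, weight Wⁱ, and the normalized adjacencies have norm ≤ 1 with ‖Ã − Ã'‖ ≤ ε, then ‖f_L(A) − f_L(A')‖ ≤ L · (∏_{i=1}^{L} ‖Wⁱ‖) · ‖X‖ · ε, where f_L is the L-layer GCN defined recursively by H⁰ = X, Hⁱ = φⁱ(Ã H^{i−1} Wⁱ). -/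
open scoped Matrix.Norms.L2Operator

/-- The hidden states of an `L`-layer GCN: `H⁰ = X`, `Hⁱ⁺¹ = φⁱ(Ã Hⁱ Wⁱ)`. -/
def gcnLayers {n k : ℕ} (Ad : Matrix (Fin n) (Fin n) ℝ)
    (X : Matrix (Fin n) (Fin k) ℝ) (W : ℕ → Matrix (Fin k) (Fin k) ℝ)
    (φ : ℕ → Matrix (Fin n) (Fin k) ℝ → Matrix (Fin n) (Fin k) ℝ) :
    ℕ → Matrix (Fin n) (Fin k) ℝ
  | 0 => X
  | (i + 1) => φ i (Ad * gcnLayers Ad X W φ i * W i)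

lemma gcnLayers_norm_le {n k : ℕ} (Ad : Matrix (Fin n) (Fin n) ℝ)
    (X : Matrix (Fin n) (Fin k) ℝ) (W : ℕ → Matrix (Fin k) (Fin k) ℝ)
    (φ : ℕ → Matrix (Fin n) (Fin k) ℝ → Matrix (Fin n) (Fin k) ℝ)
    (hφ : ∀ i M N, ‖φ i M - φ i N‖ ≤ ‖M - N‖)
    (hφ0 : ∀ i, φ i 0 = 0) (hA : ‖Ad‖ ≤ 1) (L : ℕ) :
    ‖gcnLayers Ad X W φ L‖ ≤ (∏ i ∈ Finset.range L, ‖W i‖) * ‖X‖ := by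
  induction L with
  | zero => simp [gcnLayers]
  | succ L ih =>
    have h1 : ‖φ L (Ad * gcnLayers Ad X W φ L * W L)‖
        ≤ ‖Ad * gcnLayers Ad X W φ L * W L‖ := by
      have := hφ L (Ad * gcnLayers Ad X W φ L * W L) 0
      simpa [hφ0 L] using this
    have h2 : ‖Ad * gcnLayers Ad X W φ L * W L‖
        ≤ ‖Ad‖ * ‖gcnLayers Ad X W φ L‖ * ‖W L‖ :=
      le_trans (Matrix.l2_opNorm_mul _ _)
        (mul_le_mul_of_nonneg_right (Matrix.l2_opNorm_mul _ _) (norm_nonneg _))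
    have h3 : ‖Ad‖ * ‖gcnLayers Ad X W φ L‖ * ‖W L‖
        ≤ ‖gcnLayers Ad X W φ L‖ * ‖W L‖ := by
      have : ‖Ad‖ * ‖gcnLayers Ad X W φ L‖ ≤ 1 * ‖gcnLayers Ad X W φ L‖ :=
        mul_le_mul_of_nonneg_right hA (norm_nonneg _)
      nlinarith [norm_nonneg (W L), norm_nonneg (gcnLayers Ad X W φ L)]
    calc ‖gcnLayers Ad X W φ (L + 1)‖ ≤ ‖gcnLayers Ad X W φ L‖ * ‖W L‖ :=
          le_trans h1 (le_trans h2 h3)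
      _ ≤ (∏ i ∈ Finset.range L, ‖W i‖) * ‖X‖ * ‖W L‖ :=
          mul_le_mul_of_nonneg_right ih (norm_nonneg _)
      _ = (∏ i ∈ Finset.range (L + 1), ‖W i‖) * ‖X‖ := by
          rw [Finset.prod_range_succ]; ring

/-- `L`-layer GCN perturbation bound:
`‖f_L(A) - f_L(A')‖ ≤ L (∏ᵢ ‖Wⁱ‖) ‖X‖ ε` under structural perturbation. -/
theorem gcn_L_layer_perturbation_bound {n k : ℕ} (L : ℕ)
    (At At' : Matrix (Fin n) (Fin n) ℝ) (X : Matrix (Fin n) (Fin k) ℝ)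
    (W : ℕ → Matrix (Fin k) (Fin k) ℝ)
    (φ : ℕ → Matrix (Fin n) (Fin k) ℝ → Matrix (Fin n) (Fin k) ℝ)
    (hφ : ∀ i M N, ‖φ i M - φ i N‖ ≤ ‖M - N‖)
    (hφ0 : ∀ i, φ i 0 = 0)
    (ε : ℝ) (hA : ‖At‖ ≤ 1) (hA' : ‖At'‖ ≤ 1) (hdiff : ‖At - At'‖ ≤ ε) :
    ‖gcnLayers At X W φ L - gcnLayers At' X W φ L‖
      ≤ (L : ℝ) * (∏ i ∈ Finset.range L, ‖W i‖) * ‖X‖ * ε := by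
  induction L with
  | zero => simp [gcnLayers]
  | succ L ih =>
    set H := gcnLayers At X W φ L
    set H' := gcnLayers At' X W φ L
    have hεnn : 0 ≤ ε := le_trans (norm_nonneg _) hdiff
    have hprod : 0 ≤ ∏ i ∈ Finset.range L, ‖W i‖ :=
      Finset.prod_nonneg fun i _ => norm_nonneg _
    have hH' : ‖H'‖ ≤ (∏ i ∈ Finset.range L, ‖W i‖) * ‖X‖ :=
      gcnLayers_norm_le At' X W φ hφ hφ0 hA' L
    have key : ‖At * H * W L - At' * H' * W L‖
        ≤ (‖H - H'‖ + ε * ‖H'‖) * ‖W L‖ := by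
      have hsplit : At * H * W L - At' * H' * W L
          = (At * (H - H') + (At - At') * H') * W L := by
        simp only [H, H', Matrix.mul_sub, Matrix.sub_mul, Matrix.add_mul]
        abel
      rw [hsplit]
      refine le_trans (Matrix.l2_opNorm_mul _ _) ?_
      refine mul_le_mul_of_nonneg_right ?_ (norm_nonneg _)
      refine le_trans (norm_add_le _ _) (add_le_add ?_ ?_)
      · refine le_trans (Matrix.l2_opNorm_mul _ _) ?_
        calc ‖At‖ * ‖H - H'‖ ≤ 1 * ‖H - H'‖ :=
              mul_le_mul_of_nonneg_right hA (norm_nonneg _)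
          _ = ‖H - H'‖ := one_mul _
      · exact le_trans (Matrix.l2_opNorm_mul _ _)
          (mul_le_mul_of_nonneg_right hdiff (norm_nonneg _))
    have hstep : ‖gcnLayers At X W φ (L + 1) - gcnLayers At' X W φ (L + 1)‖
        ≤ (‖H - H'‖ + ε * ‖H'‖) * ‖W L‖ :=
      le_trans (hφ L _ _) key
    refine le_trans hstep ?_
    have h1 : ‖H - H'‖ + ε * ‖H'‖
        ≤ (L : ℝ) * (∏ i ∈ Finset.range L, ‖W i‖) * ‖X‖ * ε
          + ε * ((∏ i ∈ Finset.range L, ‖W i‖) * ‖X‖) :=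
      add_le_add ih (mul_le_mul_of_nonneg_left hH' hεnn)
    have h2 : (‖H - H'‖ + ε * ‖H'‖) * ‖W L‖
        ≤ ((L : ℝ) * (∏ i ∈ Finset.range L, ‖W i‖) * ‖X‖ * ε
          + ε * ((∏ i ∈ Finset.range L, ‖W i‖) * ‖X‖)) * ‖W L‖ :=
      mul_le_mul_of_nonneg_right h1 (norm_nonneg _)
    refine le_trans h2 (le_of_eq ?_)
    rw [Finset.prod_range_succ]
    push_cast
    ring
end
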